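/- arXiv:1801.06089 — 6 statements merged into one kernel-verified Lean document; each statement's English description precedes it below -/
import Mathlib

section
/- Let p be a prime and c a positive integer such that p divides c but p² does not divide c, and let m, n be integers. Let p* be an integer with p·p* ≡ 1 (mod c/p). Then S(m, p·n; c) = −S(p*·m, n; c/p) if p does not divide m, and S(m, p·n; c) = (p−1)·S(p*·m, n; c/p) if p divides m. -/
/-- The Kloosterman sum `S(m,n;c) = ∑_{d ∈ (ℤ/cℤ)ˣ} e((d̄·m + d·n)/c)`,
where `e(x) = exp(2πi·x)`. -/
noncomputable def Kl (m n : ℤ) (c : ℕ) : ℂ :=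
  if h : c = 0 then 0 else
  haveI : NeZero c := ⟨h⟩
  ∑ d : (ZMod c)ˣ,
    Complex.exp (2 * Real.pi * Complex.I *
      (((((d⁻¹ : (ZMod c)ˣ) : ZMod c).val : ℂ) * (m : ℂ) +
        (((d : ZMod c).val : ℂ) * (n : ℂ))) / (c : ℂ)))

/-!
Write `c = p q` with `p ∤ q`, and let `q̄ q ≡ 1 (mod p)`, `p̄ p ≡ 1 (mod q)`. By the Chinese
remainder theorem `(ℤ/pqℤ)ˣ ≅ (ℤ/pℤ)ˣ × (ℤ/qℤ)ˣ`, and `e(x/pq) = e(q̄x/p) e(p̄x/q)` because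
`q q̄ + p p̄ ≡ 1 (mod pq)`; hence the Kloosterman sum is twisted multiplicative:
`S(a, b; pq) = S(q̄a, q̄b; p) S(p̄a, p̄b; q)`. For `b = pn` the `p`-factor is the Ramanujan sum
`∑_{u ∈ (ℤ/pℤ)ˣ} e(q̄au/p)`, which is `p - 1` or `-1` according as `p ∣ a` or not, and the
`q`-factor is `S(p* a, n; q)` because `p̄ ≡ p* (mod q)`.
-/

open Finset ZMod

theorem sum_units_eq_sum_sub_zero {K M : Type*} [Field K] [Fintype K] [DecidableEq K]
    [AddCommGroup M] (f : K → M) : ∑ u : Kˣ, f u = ∑ x, f x - f 0 := by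
  rw [← sum_erase_eq_sub (mem_univ 0), sum_subtype (univ.erase 0) (p := (· ≠ 0)) (by simp) f]
  exact Fintype.sum_equiv unitsEquivNeZero _ _ fun _ => rfl

namespace ZMod

noncomputable def kloosterman (c : ℕ) [NeZero c] (a b : ZMod c) : ℂ :=
  ∑ d : (ZMod c)ˣ, stdAddChar (((d⁻¹ : (ZMod c)ˣ) : ZMod c) * a + (d : ZMod c) * b)

theorem chineseRemainder_fst {p q : ℕ} (h : p.Coprime q) (z : ZMod (p * q)) :
    (chineseRemainder h z).1 = cast z := by
  simp [chineseRemainder, Prod.fst_zmod_cast]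

theorem chineseRemainder_snd {p q : ℕ} (h : p.Coprime q) (z : ZMod (p * q)) :
    (chineseRemainder h z).2 = cast z := by
  simp [chineseRemainder, Prod.snd_zmod_cast]

def unitsChineseRemainder {p q : ℕ} (h : p.Coprime q) :
    (ZMod (p * q))ˣ ≃* (ZMod p)ˣ × (ZMod q)ˣ :=
  (Units.mapEquiv (chineseRemainder h).toMulEquiv).trans MulEquiv.prodUnits

theorem unitsChineseRemainder_fst {p q : ℕ} (h : p.Coprime q) (d : (ZMod (p * q))ˣ) :
    ((unitsChineseRemainder h d).1 : ZMod p) = cast (d : ZMod (p * q)) :=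
  chineseRemainder_fst h d

theorem unitsChineseRemainder_snd {p q : ℕ} (h : p.Coprime q) (d : (ZMod (p * q))ˣ) :
    ((unitsChineseRemainder h d).2 : ZMod q) = cast (d : ZMod (p * q)) :=
  chineseRemainder_snd h d

theorem stdAddChar_natCast_mul_of_mul_eq {N p q : ℕ} [NeZero N] [NeZero p] (hN : p * q = N)
    (y : ZMod N) : stdAddChar ((q : ZMod N) * y) = stdAddChar (cast y : ZMod p) := by
  subst hN
  obtain ⟨j, rfl⟩ := intCast_surjective y
  have hq : (q : ℂ) ≠ 0 := by exact_mod_cast right_ne_zero_of_mul (NeZero.ne (p * q))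
  rw [cast_intCast (dvd_mul_right p q), ← Int.cast_natCast, ← Int.cast_mul, stdAddChar_coe,
    stdAddChar_coe]
  congr 1
  push_cast
  field_simp

theorem stdAddChar_eq_mul_of_coprime {p q : ℕ} [NeZero p] [NeZero q] (h : p.Coprime q)
    (x : ZMod (p * q)) :
    stdAddChar x =
      stdAddChar ((q : ZMod p)⁻¹ * cast x) * stdAddChar ((p : ZMod q)⁻¹ * cast x) := by
  set r : ZMod (p * q) := ((q : ZMod p)⁻¹.val : ZMod (p * q))
  set s : ZMod (p * q) := ((p : ZMod q)⁻¹.val : ZMod (p * q))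
  have hr : (cast r : ZMod p) = (q : ZMod p)⁻¹ := by
    rw [cast_natCast (dvd_mul_right p q), natCast_zmod_val]
  have hs : (cast s : ZMod q) = (p : ZMod q)⁻¹ := by
    rw [cast_natCast (dvd_mul_left q p), natCast_zmod_val]
  have hqp : (q : ZMod p) * (q : ZMod p)⁻¹ = 1 := coe_mul_inv_eq_one q h.symm
  have hpq : (p : ZMod q) * (p : ZMod q)⁻¹ = 1 := coe_mul_inv_eq_one p h
  have hunit : (q : ZMod (p * q)) * r + p * s = 1 := by
    refine (chineseRemainder h).injective (Prod.ext ?_ ?_)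
    · simp [chineseRemainder_fst, hr, hqp]
    · simp [chineseRemainder_snd, hs, hpq]
  calc stdAddChar x
      = stdAddChar ((q : ZMod (p * q)) * (r * x) + (p : ZMod (p * q)) * (s * x)) := by
        rw [← mul_assoc, ← mul_assoc, ← add_mul, hunit, one_mul]
    _ = _ := by
        rw [AddChar.map_add_eq_mul, stdAddChar_natCast_mul_of_mul_eq rfl,
          stdAddChar_natCast_mul_of_mul_eq (mul_comm q p), cast_mul (dvd_mul_right p q),
          cast_mul (dvd_mul_left q p), hr, hs]

theorem kloosterman_mul_of_coprime {p q : ℕ} [NeZero p] [NeZero q] (h : p.Coprime q)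
    (a b : ZMod (p * q)) :
    kloosterman (p * q) a b =
      kloosterman p ((q : ZMod p)⁻¹ * cast a) ((q : ZMod p)⁻¹ * cast b) *
        kloosterman q ((p : ZMod q)⁻¹ * cast a) ((p : ZMod q)⁻¹ * cast b) := by
  rw [kloosterman, kloosterman, kloosterman, sum_mul_sum, ← Fintype.sum_prod_type']
  refine Fintype.sum_equiv (unitsChineseRemainder h).toEquiv _ _ fun d => ?_
  simp only [MulEquiv.toEquiv_eq_coe, MulEquiv.coe_toEquiv, ← Prod.fst_inv, ← Prod.snd_inv,
    ← map_inv, unitsChineseRemainder_fst, unitsChineseRemainder_snd]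
  rw [stdAddChar_eq_mul_of_coprime h, cast_add (dvd_mul_right p q), cast_add (dvd_mul_left q p)]
  simp only [cast_mul (dvd_mul_right p q), cast_mul (dvd_mul_left q p)]
  congr 2 <;> ring

theorem kloosterman_zero_right (p : ℕ) [Fact p.Prime] (a : ZMod p) :
    kloosterman p a 0 = if a = 0 then (p : ℂ) - 1 else -1 := by
  classical
  have hinv : kloosterman p a 0 = ∑ u : (ZMod p)ˣ, stdAddChar ((u : ZMod p) * a) := by
    rw [kloosterman]
    simp only [mul_zero, add_zero]
    exact Fintype.sum_equiv (Equiv.inv _) _ _ fun _ => rfl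
  rw [hinv, sum_units_eq_sum_sub_zero (fun x => stdAddChar (x * a)),
    AddChar.sum_mulShift a (isPrimitive_stdAddChar p), ZMod.card]
  simp only [zero_mul, AddChar.map_zero_eq_one]
  split_ifs <;> ring

theorem kloosterman_prime_mul_of_coprime {p q : ℕ} [Fact p.Prime] [NeZero q] (h : p.Coprime q)
    (a b : ZMod (p * q)) :
    kloosterman (p * q) a (p * b) =
      (if (cast a : ZMod p) = 0 then (p : ℂ) - 1 else -1) *
        kloosterman q ((p : ZMod q)⁻¹ * cast a) (cast b) := by
  have hqp : (q : ZMod p)⁻¹ * (q : ZMod p) = 1 := by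
    rw [mul_comm]; exact coe_mul_inv_eq_one q h.symm
  have hpq : (p : ZMod q)⁻¹ * (p : ZMod q) = 1 := by
    rw [mul_comm]; exact coe_mul_inv_eq_one p h
  rw [kloosterman_mul_of_coprime h, cast_mul (dvd_mul_right p q), cast_mul (dvd_mul_left q p),
    cast_natCast (dvd_mul_right p q), cast_natCast (dvd_mul_left q p), natCast_self, zero_mul,
    mul_zero, kloosterman_zero_right, ← mul_assoc, hpq, one_mul]
  simp only [mul_eq_zero, left_ne_zero_of_mul_eq_one hqp, false_or]

end ZMod

theorem Kl_eq_kloosterman (m n : ℤ) (c : ℕ) [NeZero c] : Kl m n c = kloosterman c m n := by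
  rw [Kl, dif_neg (NeZero.ne c)]
  refine sum_congr rfl fun d _ => ?_
  have hcast : (((((d⁻¹ : (ZMod c)ˣ) : ZMod c).val * m + (d : ZMod c).val * n : ℤ)) : ZMod c)
      = ((d⁻¹ : (ZMod c)ˣ) : ZMod c) * m + (d : ZMod c) * n := by
    push_cast
    rw [natCast_zmod_val, natCast_zmod_val]
  rw [← hcast, stdAddChar_coe]
  push_cast
  ring_nf

/-- If `p ∥ c` (that is, `p ∣ c` but `p² ∤ c`) and `p·p* ≡ 1 (mod c/p)`, then
`S(m, pn; c) = −S(p*m, n; c/p)` if `p ∤ m`, and `S(m, pn; c) = (p−1)·S(p*m, n; c/p)`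
if `p ∣ m`. -/
theorem stmt_0 (p : ℕ) (hp : p.Prime) (c : ℕ) (hc : 0 < c)
    (hpc : p ∣ c) (hp2c : ¬ (p ^ 2 ∣ c)) (m n : ℤ) (pstar : ℤ)
    (hpstar : (p : ℤ) * pstar ≡ 1 [ZMOD ((c / p : ℕ) : ℤ)]) :
    (¬ (p : ℤ) ∣ m → Kl m ((p : ℤ) * n) c = - Kl (pstar * m) n (c / p)) ∧
    ((p : ℤ) ∣ m → Kl m ((p : ℤ) * n) c = ((p : ℂ) - 1) * Kl (pstar * m) n (c / p)) := by
  obtain ⟨q, rfl⟩ := hpc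
  have : Fact p.Prime := ⟨hp⟩
  have : NeZero q := ⟨by rintro rfl; simp at hc⟩
  have hcop : p.Coprime q :=
    hp.coprime_iff_not_dvd.2 fun ⟨t, ht⟩ => hp2c ⟨t, by rw [ht]; ring⟩
  rw [Nat.mul_div_cancel_left q hp.pos] at hpstar ⊢
  have hpstar' : (p : ZMod q)⁻¹ = pstar := ZMod.inv_eq_of_mul_eq_one _ _ _ <| by
    exact_mod_cast (ZMod.intCast_eq_intCast_iff _ _ _).2 hpstar
  have hm : (m : ZMod p) = 0 ↔ (p : ℤ) ∣ m := intCast_zmod_eq_zero_iff_dvd m p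
  rw [Kl_eq_kloosterman, Kl_eq_kloosterman, Int.cast_mul, Int.cast_natCast,
    kloosterman_prime_mul_of_coprime hcop, cast_intCast (dvd_mul_right p q),
    cast_intCast (dvd_mul_left q p), cast_intCast (dvd_mul_left q p), hpstar', Int.cast_mul]
  exact ⟨fun h => by rw [if_neg (hm.not.2 h), neg_one_mul], fun h => by rw [if_pos (hm.2 h)]⟩
end

section
/- Let p be a prime, c a positive integer with p² dividing c, and let m, n be integers with p not dividing m. Then S(m, p·n; c) = 0. -/
/-- If `p² ∣ c` and `p ∤ m`, then `S(m, pn; c) = 0`. -/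
theorem stmt_1 (p : ℕ) (hp : p.Prime) (c : ℕ) (hc : 0 < c)
    (hp2c : p ^ 2 ∣ c) (m n : ℤ) (hpm : ¬ (p : ℤ) ∣ m) :
    Kl m ((p : ℤ) * n) c = 0 := by
  have hc0 : c ≠ 0 := hc.ne'
  haveI : NeZero c := ⟨hc0⟩
  haveI : Fact p.Prime := ⟨hp⟩
  have hpc : p ∣ c := dvd_trans (dvd_pow_self p two_ne_zero) hp2c
  have hcp : c / p * p = c := Nat.div_mul_cancel hpc
  set ψ : AddChar (ZMod c) ℂ := ZMod.stdAddChar with hψ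
  set k : ZMod c := ((c / p : ℕ) : ZMod c) with hk
  -- key facts about k
  have hk2 : k * k = 0 := by
    rw [hk, ← Nat.cast_mul, ZMod.natCast_eq_zero_iff]
    obtain ⟨c', hc'⟩ := hp2c
    have hdiv : c / p = p * c' := by
      subst hc'
      rw [pow_two, mul_assoc, Nat.mul_div_cancel_left _ hp.pos]
    exact ⟨c', by rw [hdiv, hc']; ring⟩
  have hkp : (p : ZMod c) * k = 0 := by
    rw [hk, ← Nat.cast_mul, mul_comm, hcp, ZMod.natCast_self]
  -- units 1 + t k
  have hunit : ∀ t : ℕ, (1 + (t : ZMod c) * k) * (1 - (t : ZMod c) * k) = 1 := by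
    intro t
    have : (1 + (t : ZMod c) * k) * (1 - (t : ZMod c) * k)
        = 1 - ((t : ZMod c) * (t : ZMod c)) * (k * k) := by ring
    rw [this, hk2, mul_zero, sub_zero]
  let u : ℕ → (ZMod c)ˣ := fun t =>
    ⟨1 + (t : ZMod c) * k, 1 - (t : ZMod c) * k, hunit t, by
      rw [mul_comm]; exact hunit t⟩
  -- the exponent
  let x : (ZMod c)ˣ → ZMod c := fun d =>
    ((d⁻¹ : (ZMod c)ˣ) : ZMod c) * (m : ZMod c) + (d : ZMod c) * (((p : ℤ) * n : ℤ) : ZMod c)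
  -- rewrite Kl as a character sum
  have hKl : Kl m ((p : ℤ) * n) c = ∑ d : (ZMod c)ˣ, ψ (x d) := by
    rw [Kl, dif_neg hc0]
    refine Finset.sum_congr rfl fun d _ => ?_
    have h1 := ZMod.stdAddChar_coe (N := c)
      ((((d⁻¹ : (ZMod c)ˣ) : ZMod c).val : ℤ) * m + (((d : ZMod c).val : ℤ)) * ((p : ℤ) * n))
    have h2 : (((((d⁻¹ : (ZMod c)ˣ) : ZMod c).val : ℤ) * m
        + (((d : ZMod c).val : ℤ)) * ((p : ℤ) * n) : ℤ) : ZMod c) = x d := by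
      push_cast
      simp [x, ZMod.natCast_val, ZMod.cast_id]
    rw [h2] at h1
    rw [hψ, h1]
    congr 1
    push_cast
    ring
  -- the kernel fact: k * w = 0 implies w ≡ 0 mod p
  have hker : ∀ w : ZMod c, k * w = 0 → (ZMod.castHom hpc (ZMod p)) w = 0 := by
    intro w hw
    have hw' : ((c / p * w.val : ℕ) : ZMod c) = 0 := by
      push_cast
      rw [ZMod.natCast_val, ZMod.cast_id]
      exact hw
    rw [ZMod.natCast_eq_zero_iff] at hw'
    have hcp0 : 0 < c / p := Nat.div_pos (Nat.le_of_dvd hc hpc) hp.pos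
    have hdvd : p ∣ w.val := by
      rcases hw' with ⟨e, he⟩
      refine ⟨e, ?_⟩
      refine Nat.eq_of_mul_eq_mul_left hcp0 ?_
      calc c / p * w.val = c * e := he
        _ = (c / p * p) * e := by rw [hcp]
        _ = c / p * (p * e) := by ring
    rw [ZMod.castHom_apply, ← ZMod.natCast_val, ZMod.natCast_eq_zero_iff]
    exact hdvd
  -- nonvanishing: k * d⁻¹ * m ≠ 0
  have hnz : ∀ d : (ZMod c)ˣ, k * ((d⁻¹ : (ZMod c)ˣ) : ZMod c) * (m : ZMod c) ≠ 0 := by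
    intro d h0
    have h0' : k * (((d⁻¹ : (ZMod c)ˣ) : ZMod c) * (m : ZMod c)) = 0 := by
      rw [← mul_assoc]; exact h0
    have := hker _ h0'
    rw [map_mul, map_intCast] at this
    have hmne : ((m : ZMod p)) ≠ 0 := by
      rw [Ne, ZMod.intCast_zmod_eq_zero_iff_dvd]
      exact hpm
    have hdne : (ZMod.castHom hpc (ZMod p)) ((d⁻¹ : (ZMod c)ˣ) : ZMod c) ≠ 0 := by
      have h1 : ((d⁻¹ : (ZMod c)ˣ) : ZMod c) * (d : ZMod c) = 1 := by
        rw [← Units.val_mul, inv_mul_cancel, Units.val_one]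
      have h2 : (ZMod.castHom hpc (ZMod p)) ((d⁻¹ : (ZMod c)ˣ) : ZMod c)
          * (ZMod.castHom hpc (ZMod p)) (d : ZMod c) = 1 := by
        rw [← map_mul, h1, map_one]
      exact left_ne_zero_of_mul_eq_one h2
    rcases mul_eq_zero.mp this with h | h
    · exact hdne h
    · exact hmne h
  -- the shifted exponent
  have hx : ∀ (t : ℕ) (d : (ZMod c)ˣ),
      x (u t * d) = x d + t • (-(k * ((d⁻¹ : (ZMod c)ˣ) : ZMod c) * (m : ZMod c))) := by
    intro t d
    have h1 : ((u t * d : (ZMod c)ˣ) : ZMod c) = (1 + (t : ZMod c) * k) * (d : ZMod c) := rfl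
    have h2 : (((u t * d)⁻¹ : (ZMod c)ˣ) : ZMod c)
        = ((d⁻¹ : (ZMod c)ˣ) : ZMod c) * (1 - (t : ZMod c) * k) := by
      rw [mul_inv_rev, Units.val_mul]
      rfl
    have hpn : (((p : ℤ) * n : ℤ) : ZMod c) = (p : ZMod c) * ((n : ℤ) : ZMod c) := by
      push_cast; ring
    show ((((u t * d)⁻¹ : (ZMod c)ˣ) : ZMod c)) * (m : ZMod c)
        + ((u t * d : (ZMod c)ˣ) : ZMod c) * (((p : ℤ) * n : ℤ) : ZMod c)
        = (((d⁻¹ : (ZMod c)ˣ) : ZMod c) * (m : ZMod c)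
          + (d : ZMod c) * (((p : ℤ) * n : ℤ) : ZMod c))
        + t • (-(k * ((d⁻¹ : (ZMod c)ˣ) : ZMod c) * (m : ZMod c)))
    rw [h1, h2, hpn, nsmul_eq_mul]
    linear_combination ((t : ZMod c) * (d : ZMod c) * ((n : ℤ) : ZMod c)) * hkp
  -- inner geometric sums vanish
  have key : ∀ d : (ZMod c)ˣ, ∑ t ∈ Finset.range p, ψ (x (u t * d)) = 0 := by
    intro d
    set y : ZMod c := -(k * ((d⁻¹ : (ZMod c)ˣ) : ZMod c) * (m : ZMod c)) with hy
    have hsum : ∑ t ∈ Finset.range p, ψ (x (u t * d))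
        = ψ (x d) * ∑ t ∈ Finset.range p, (ψ y) ^ t := by
      rw [Finset.mul_sum]
      refine Finset.sum_congr rfl fun t _ => ?_
      rw [hx t d, AddChar.map_add_eq_mul, AddChar.map_nsmul_eq_pow]
    have hzp : (ψ y) ^ p = 1 := by
      rw [← AddChar.map_nsmul_eq_pow]
      have : p • y = 0 := by
        rw [nsmul_eq_mul, hy]
        linear_combination (-(((d⁻¹ : (ZMod c)ˣ) : ZMod c)) * (m : ZMod c)) * hkp
      rw [this, AddChar.map_zero_eq_one]
    have hz1 : ψ y ≠ 1 := by
      intro h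
      have : y = 0 := by
        apply ZMod.injective_stdAddChar
        rw [← hψ, h, ← AddChar.map_zero_eq_one ψ, hψ]
      rw [hy, neg_eq_zero] at this
      exact hnz d this
    rw [hsum, geom_sum_eq hz1, hzp, sub_self, zero_div, mul_zero]
  -- reindexing
  have reind : ∀ t : ℕ, ∑ d : (ZMod c)ˣ, ψ (x d) = ∑ d : (ZMod c)ˣ, ψ (x (u t * d)) := by
    intro t
    exact (Fintype.sum_equiv (Equiv.mulLeft (u t))
      (fun d => ψ (x (u t * d))) (fun d => ψ (x d)) (fun d => rfl)).symm
  -- assemble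
  have hfinal : (p : ℂ) * ∑ d : (ZMod c)ˣ, ψ (x d) = 0 := by
    calc (p : ℂ) * ∑ d : (ZMod c)ˣ, ψ (x d)
        = ∑ _t ∈ Finset.range p, ∑ d : (ZMod c)ˣ, ψ (x d) := by
          rw [Finset.sum_const, Finset.card_range, nsmul_eq_mul]
      _ = ∑ t ∈ Finset.range p, ∑ d : (ZMod c)ˣ, ψ (x (u t * d)) :=
          Finset.sum_congr rfl fun t _ => reind t
      _ = ∑ d : (ZMod c)ˣ, ∑ t ∈ Finset.range p, ψ (x (u t * d)) := Finset.sum_comm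
      _ = 0 := by
          rw [Finset.sum_eq_zero fun d _ => key d]
  rw [hKl]
  have hpne : (p : ℂ) ≠ 0 := Nat.cast_ne_zero.mpr hp.ne_zero
  exact (mul_eq_zero.mp hfinal).resolve_left hpne
end

section
/- Let p be a prime, c a positive integer, and m, n integers. Then S(p·m, p·n; p²·c) = p·S(m, n; p·c). -/
open Complex Finset

/-- Generic fiberwise summation for a surjective hom between finite groups. -/
lemma sum_comp_surjective {G H : Type*} [Group G] [Group H] [Fintype G] [Fintype H]
    [DecidableEq H] (φ : G →* H) (hφ : Function.Surjective φ) (g : H → ℂ) :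
    ∑ d : G, g (φ d) = (Nat.card φ.ker : ℂ) * ∑ b : H, g b := by
  rw [← Fintype.sum_fiberwise (fun d => φ d) (fun d => g (φ d)), Finset.mul_sum]
  refine Finset.sum_congr rfl fun b _ => ?_
  have h1 : ∑ i : { i // φ i = b }, g (φ i) = ∑ _i : { i // φ i = b }, g b :=
    Finset.sum_congr rfl fun i _ => by rw [i.2]
  rw [h1, Finset.sum_const, Finset.card_univ]
  have h2 : Fintype.card { i // φ i = b } = Nat.card φ.ker := by
    rw [← Nat.card_eq_fintype_card]
    have e : { i // φ i = b } ≃ ↑(⇑φ ⁻¹' {b}) := Equiv.subtypeEquivRight (by simp)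
    rw [Nat.card_congr e, Nat.card_congr (MonoidHom.fiberEquivKerOfSurjective hφ b)]
  rw [h2]
  simp [mul_comm]

lemma card_ker_eq {G H : Type*} [Group G] [Group H] [Finite G] [Finite H]
    (φ : G →* H) (hφ : Function.Surjective φ) :
    Nat.card φ.ker * Nat.card H = Nat.card G := by
  rw [← Nat.card_congr (QuotientGroup.quotientKerEquivOfSurjective φ hφ).toEquiv,
    mul_comm, ← Subgroup.card_eq_card_quotient_mul_card_subgroup]

lemma exp_key (p N : ℕ) (hp : 0 < p) (hN : 0 < N) (m n : ℤ) (x y : ℕ) :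
    Complex.exp (2 * Real.pi * Complex.I *
      (((x : ℂ) * ((p : ℤ) * m : ℤ) + (y : ℂ) * ((p : ℤ) * n : ℤ)) / ((p * N : ℕ) : ℂ))) =
    Complex.exp (2 * Real.pi * Complex.I *
      ((((x % N : ℕ) : ℂ) * (m : ℤ) + ((y % N : ℕ) : ℂ) * (n : ℤ)) / ((N : ℕ) : ℂ))) := by
  rw [Complex.exp_eq_exp_iff_exists_int]
  refine ⟨(x / N : ℕ) * m + (y / N : ℕ) * n, ?_⟩
  have hx : (x : ℂ) = (N : ℂ) * (x / N : ℕ) + ((x % N : ℕ) : ℂ) := by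
    exact_mod_cast (Nat.div_add_mod x N).symm
  have hy : (y : ℂ) = (N : ℂ) * (y / N : ℕ) + ((y % N : ℕ) : ℂ) := by
    exact_mod_cast (Nat.div_add_mod y N).symm
  have hpN : ((p : ℂ)) ≠ 0 := Nat.cast_ne_zero.mpr hp.ne'
  have hNN : ((N : ℂ)) ≠ 0 := Nat.cast_ne_zero.mpr hN.ne'
  rw [hx, hy]
  set a : ℕ := x / N
  set b : ℕ := y / N
  set r : ℕ := x % N
  set s : ℕ := y % N
  push_cast
  field_simp
  ring


/-- `S(pm, pn; p²c) = p·S(m, n; pc)`. -/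
theorem stmt_2 (p : ℕ) (hp : p.Prime) (c : ℕ) (hc : 0 < c) (m n : ℤ) :
    Kl ((p : ℤ) * m) ((p : ℤ) * n) (p ^ 2 * c) = (p : ℂ) * Kl m n (p * c) := by
  have hp0 : 0 < p := hp.pos
  set N := p * c with hNdef
  have hN : 0 < N := Nat.mul_pos hp0 hc
  have hM : p ^ 2 * c = p * N := by ring
  have hMpos : 0 < p ^ 2 * c := by positivity
  haveI : NeZero (p ^ 2 * c) := ⟨hMpos.ne'⟩
  haveI : NeZero N := ⟨hN.ne'⟩
  have hdvd : N ∣ p ^ 2 * c := ⟨p, by ring⟩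
  set φ := ZMod.unitsMap hdvd with hφdef
  have hsurj : Function.Surjective φ := ZMod.unitsMap_surjective hdvd
  -- val of reduction
  have hval : ∀ e : (ZMod (p ^ 2 * c))ˣ,
      ((φ e : ZMod N)).val = (e : ZMod (p ^ 2 * c)).val % N := by
    intro e
    rw [hφdef, ZMod.unitsMap_def]
    show ((ZMod.castHom hdvd (ZMod N)) (e : ZMod (p ^ 2 * c))).val = _
    rw [ZMod.castHom_apply, ← ZMod.natCast_val, ZMod.val_natCast]
  set g : (ZMod N)ˣ → ℂ := fun b =>
    Complex.exp (2 * Real.pi * Complex.I *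
      (((((b⁻¹ : (ZMod N)ˣ) : ZMod N).val : ℂ) * (m : ℂ) +
        (((b : ZMod N)).val : ℂ) * (n : ℂ)) / (N : ℂ))) with hgdef
  have hterm : ∀ d : (ZMod (p ^ 2 * c))ˣ,
      Complex.exp (2 * Real.pi * Complex.I *
        (((((d⁻¹ : (ZMod (p ^ 2 * c))ˣ) : ZMod (p ^ 2 * c)).val : ℂ) * (((p : ℤ) * m : ℤ) : ℂ) +
          (((d : ZMod (p ^ 2 * c)).val : ℂ) * (((p : ℤ) * n : ℤ) : ℂ))) / ((p ^ 2 * c : ℕ) : ℂ))) =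
      g (φ d) := by
    intro d
    have h1 := exp_key p N hp0 hN m n
      ((d⁻¹ : (ZMod (p ^ 2 * c))ˣ) : ZMod (p ^ 2 * c)).val ((d : ZMod (p ^ 2 * c))).val
    have hMc : ((p ^ 2 * c : ℕ) : ℂ) = ((p * N : ℕ) : ℂ) := by rw [hM]
    rw [hMc, h1]
    have hv1 : (((φ d)⁻¹ : (ZMod N)ˣ) : ZMod N).val
        = ((d⁻¹ : (ZMod (p ^ 2 * c))ˣ) : ZMod (p ^ 2 * c)).val % N := by
      rw [← map_inv φ d]; exact hval d⁻¹
    simp only [hgdef]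
    rw [hv1, hval d]
  calc Kl ((p : ℤ) * m) ((p : ℤ) * n) (p ^ 2 * c)
      = ∑ d : (ZMod (p ^ 2 * c))ˣ, g (φ d) := by
        rw [Kl, dif_neg hMpos.ne']
        exact Finset.sum_congr rfl fun d _ => hterm d
    _ = (Nat.card φ.ker : ℂ) * ∑ b : (ZMod N)ˣ, g b := sum_comp_surjective φ hsurj g
    _ = (p : ℂ) * Kl m n N := by
        have hcard : Nat.card φ.ker = p := by
          have h1 := card_ker_eq φ hsurj
          have h2 : Nat.card (ZMod N)ˣ = N.totient := by
            rw [Nat.card_eq_fintype_card, ZMod.card_units_eq_totient]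
          have h3 : Nat.card (ZMod (p ^ 2 * c))ˣ = p * N.totient := by
            rw [Nat.card_eq_fintype_card, ZMod.card_units_eq_totient, hM,
              Nat.totient_mul_of_prime_of_dvd hp ⟨c, rfl⟩]
          rw [h2, h3] at h1
          exact Nat.eq_of_mul_eq_mul_right (Nat.totient_pos.mpr hN) h1
        rw [hcard, Kl, dif_neg hN.ne']
end

section
/- Let q be a prime, w ∈ ℂ, and let m, n be positive integers with q not dividing n. Then τ_w^{(q)}(m)·τ_w^{(q)}(n) = Σ_{d | gcd(m,n)} τ_w^{(q)}(m·n/d²). -/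
/-- `τ_w(n) = ∑_{d ∣ n} d^w·(n/d)^{−w}`, with complex powers of positive reals
taken via the principal branch (real logarithm). -/
noncomputable def tauw (w : ℂ) (n : ℕ) : ℂ :=
  ∑ d ∈ n.divisors, (d : ℂ) ^ w * ((n / d : ℕ) : ℂ) ^ (-w)

/-- `τ_w^{(q)}(n) = τ_w(n / gcd(n,q))`. -/
noncomputable def tauwq (w : ℂ) (q n : ℕ) : ℂ := tauw w (n / n.gcd q)

open Finset

/-- Hecke-style convolution identity for a completely multiplicative function,
proved via an explicit bijection. -/
lemma hecke_nat (M N : ℕ) (hM : M ≠ 0) (hN : N ≠ 0) (F : ℕ → ℂ)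
    (hF : ∀ a b : ℕ, F (a * b) = F a * F b) :
    (∑ a ∈ M.divisors, F a) * (∑ b ∈ N.divisors, F b)
      = ∑ d ∈ (M.gcd N).divisors, ∑ e ∈ (M * N / d ^ 2).divisors, F d * F e := by
  rw [Finset.sum_mul_sum, ← Finset.sum_product', Finset.sum_sigma']
  refine Finset.sum_nbij'
    (i := fun p => ⟨p.1.gcd (N / p.2), p.1 * p.2 / p.1.gcd (N / p.2)⟩)
    (j := fun q => (q.1 * q.2 / q.2.gcd (N / q.1), q.2.gcd (N / q.1)))
    ?_ ?_ ?_ ?_ ?_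
  -- forward membership
  · rintro ⟨a, b⟩ hp
    simp only [Finset.mem_product, Nat.mem_divisors] at hp
    obtain ⟨⟨ha, -⟩, ⟨hb, -⟩⟩ := hp
    set d := a.gcd (N / b) with hd
    have hdbN : b * d ∣ N := (Nat.dvd_div_iff_mul_dvd hb).mp (Nat.gcd_dvd_right _ _)
    have hda : d ∣ a := Nat.gcd_dvd_left _ _
    have habd : a * b * d ∣ M * N := by
      have := mul_dvd_mul ha hdbN
      calc a * b * d = a * (b * d) := by ring
      _ ∣ M * N := this
    have hdab : d ∣ a * b := hda.mul_right b
    have hd2MN : d ^ 2 ∣ M * N := by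
      refine dvd_trans ?_ habd
      rw [pow_two]
      exact mul_dvd_mul hdab dvd_rfl
    have hMN : M * N ≠ 0 := mul_ne_zero hM hN
    simp only [Finset.mem_sigma, Nat.mem_divisors]
    refine ⟨⟨Nat.dvd_gcd (hda.trans ha) ((Nat.gcd_dvd_right _ _).trans (Nat.div_dvd_of_dvd hb)),
      Nat.gcd_ne_zero_left hM⟩, ?_, ?_⟩
    · rw [Nat.dvd_div_iff_mul_dvd hd2MN, pow_two, mul_assoc, Nat.mul_div_cancel' hdab]
      calc d * (a * b) = a * b * d := by ring
      _ ∣ M * N := habd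
    · have hd0 : d ≠ 0 := Nat.gcd_ne_zero_left (fun h => hM (by simpa [h] using ha))
      exact (Nat.div_pos (Nat.le_of_dvd (Nat.pos_of_ne_zero hMN) hd2MN)
        (Nat.pos_of_ne_zero (by positivity))).ne'
  -- backward membership
  · rintro ⟨d, e⟩ hq
    simp only [Finset.mem_sigma, Nat.mem_divisors] at hq
    obtain ⟨⟨hdg, -⟩, he, hMNd⟩ := hq
    have hdM : d ∣ M := hdg.trans (Nat.gcd_dvd_left _ _)
    have hdN : d ∣ N := hdg.trans (Nat.gcd_dvd_right _ _)
    have hd0 : d ≠ 0 := fun h => hM (by simpa [h] using hdM)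
    have he0 : e ≠ 0 := fun h => hMNd (by simp [h] at he ⊢; omega)
    have hd2MN : d ^ 2 ∣ M * N := by rw [pow_two]; exact mul_dvd_mul hdM hdN
    have hed2 : d ^ 2 * e ∣ M * N := by
      rw [← Nat.dvd_div_iff_mul_dvd hd2MN]; exact he
    set b := e.gcd (N / d) with hb
    have hbe : b ∣ e := Nat.gcd_dvd_left _ _
    have hbNd : b ∣ N / d := Nat.gcd_dvd_right _ _
    have hb0 : b ≠ 0 := Nat.gcd_ne_zero_left he0
    have hdbN : d * b ∣ N := (Nat.dvd_div_iff_mul_dvd hdN).mp hbNd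
    set e' := e / b with he'
    have hee' : e = b * e' := (Nat.mul_div_cancel' hbe).symm
    set c := N / (d * b) with hc
    have hNc : N = d * b * c := (Nat.mul_div_cancel' hdbN).symm
    have hcop : Nat.Coprime e' c := by
      have := Nat.coprime_div_gcd_div_gcd (m := e) (n := N / d)
        (Nat.pos_of_ne_zero hb0)
      rwa [← hb, ← he', Nat.div_div_eq_div_mul, ← hc] at this
    have hdb0 : d * b ≠ 0 := mul_ne_zero hd0 hb0
    have hde'Mc : d * e' ∣ M * c := by
      have : (d * b) * (d * e') ∣ (d * b) * (M * c) := by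
        calc (d * b) * (d * e') = d ^ 2 * (b * e') := by ring
        _ = d ^ 2 * e := by rw [← hee']
        _ ∣ M * N := hed2
        _ = (d * b) * (M * c) := by rw [hNc]; ring
      exact (mul_dvd_mul_iff_left hdb0).mp this
    have he'M : e' ∣ M := hcop.dvd_of_dvd_mul_right ((dvd_mul_left e' d).trans hde'Mc)
    set M' := M / e' with hM'
    have hMM' : M = e' * M' := (Nat.mul_div_cancel' he'M).symm
    have he'0 : e' ≠ 0 := fun h => hM (by simpa [h] using hMM')
    have hdM' : d ∣ M' := by
      have h1 : d ∣ M' * c := by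
        have : e' * d ∣ e' * (M' * c) := by
          calc e' * d = d * e' := by ring
          _ ∣ M * c := hde'Mc
          _ = e' * (M' * c) := by rw [hMM']; ring
        exact (mul_dvd_mul_iff_left he'0).mp this
      have h2 : d ∣ M' * e' := by rw [mul_comm, ← hMM']; exact hdM
      have := Nat.dvd_gcd h2 h1
      rwa [Nat.gcd_mul_left, hcop.gcd_eq_one, mul_one] at this
    simp only [Finset.mem_product, Nat.mem_divisors]
    have hae : d * e / b = d * e' := by rw [Nat.mul_div_assoc d hbe]
    refine ⟨⟨?_, hM⟩, hbNd.trans (Nat.div_dvd_of_dvd hdN), hN⟩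
    rw [hae, hMM', mul_comm e' M']
    exact mul_dvd_mul hdM' dvd_rfl
  -- left inverse
  · rintro ⟨a, b⟩ hp
    simp only [Finset.mem_product, Nat.mem_divisors] at hp
    obtain ⟨⟨ha, -⟩, ⟨hb, -⟩⟩ := hp
    have ha0 : a ≠ 0 := fun h => hM (by simpa [h] using ha)
    have hb0 : b ≠ 0 := fun h => hN (by simpa [h] using hb)
    set d := a.gcd (N / b) with hd
    have hda : d ∣ a := Nat.gcd_dvd_left _ _
    have hdNb : d ∣ N / b := Nat.gcd_dvd_right _ _
    have hdbN : b * d ∣ N := (Nat.dvd_div_iff_mul_dvd hb).mp hdNb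
    have hdN : d ∣ N := (dvd_mul_left d b).trans hdbN
    have hd0 : d ≠ 0 := Nat.gcd_ne_zero_left ha0
    have hdab : d ∣ a * b := hda.mul_right b
    have habd : a * b / d = b * (a / d) := by
      rw [mul_comm a b, Nat.mul_div_assoc b hda]
    have hkey : (a * b / d).gcd (N / d) = b := by
      have hb1 : b ∣ a * b / d := by rw [habd]; exact dvd_mul_right b (a / d)
      have hb2 : b ∣ N / d := by
        rw [Nat.dvd_div_iff_mul_dvd hdN, mul_comm]; exact hdbN
      set g := (a * b / d).gcd (N / d) with hg
      have hbg : b ∣ g := Nat.dvd_gcd hb1 hb2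
      set h := g / b with hh
      have hgh : g = b * h := (Nat.mul_div_cancel' hbg).symm
      have hh1 : h ∣ a / d := by
        have : b * h ∣ b * (a / d) := by rw [← hgh, ← habd]; exact Nat.gcd_dvd_left _ _
        exact (mul_dvd_mul_iff_left hb0).mp this
      have hdh_a : d * h ∣ a := (Nat.dvd_div_iff_mul_dvd hda).mp hh1
      have hdh_Nb : d * h ∣ N / b := by
        rw [Nat.dvd_div_iff_mul_dvd hb]
        have : b * h * d ∣ N := by
          have h1 : b * h ∣ N / d := by rw [← hgh]; exact Nat.gcd_dvd_right _ _
          have := (Nat.dvd_div_iff_mul_dvd hdN).mp h1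
          calc b * h * d = d * (b * h) := by ring
          _ ∣ N := this
        calc b * (d * h) = b * h * d := by ring
        _ ∣ N := this
      have hdhd : d * h ∣ d := Nat.dvd_gcd hdh_a hdh_Nb
      have hh_one : h = 1 := by
        have : d * h ∣ d * 1 := by simpa using hdhd
        exact Nat.dvd_one.mp ((mul_dvd_mul_iff_left hd0).mp this)
      rw [hgh, hh_one, mul_one]
    show (_, _) = (a, b)
    have hda' : d * (a * b / d) = a * b := Nat.mul_div_cancel' hdab
    simp only [hkey]
    rw [hda', Nat.mul_div_cancel _ (Nat.pos_of_ne_zero hb0)]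
  -- right inverse
  · rintro ⟨d, e⟩ hq
    simp only [Finset.mem_sigma, Nat.mem_divisors] at hq
    obtain ⟨⟨hdg, -⟩, he, hMNd⟩ := hq
    have hdM : d ∣ M := hdg.trans (Nat.gcd_dvd_left _ _)
    have hdN : d ∣ N := hdg.trans (Nat.gcd_dvd_right _ _)
    have hd0 : d ≠ 0 := fun h => hM (by simpa [h] using hdM)
    have hMN : M * N ≠ 0 := mul_ne_zero hM hN
    have he0 : e ≠ 0 := by
      rintro rfl
      exact hMNd (by omega)
    set b := e.gcd (N / d) with hb
    have hbe : b ∣ e := Nat.gcd_dvd_left _ _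
    have hbNd : b ∣ N / d := Nat.gcd_dvd_right _ _
    have hb0 : b ≠ 0 := Nat.gcd_ne_zero_left he0
    have hbN : b ∣ N := hbNd.trans (Nat.div_dvd_of_dvd hdN)
    have hdbN : d * b ∣ N := (Nat.dvd_div_iff_mul_dvd hdN).mp hbNd
    set e' := e / b with he'
    have hee' : e = b * e' := (Nat.mul_div_cancel' hbe).symm
    have hae : d * e / b = d * e' := by rw [Nat.mul_div_assoc d hbe]
    have hdA : d ∣ d * e / b := by rw [hae]; exact dvd_mul_right d e'
    have hdNb : d ∣ N / b := by
      rw [Nat.dvd_div_iff_mul_dvd hbN, mul_comm]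
      exact hdbN
    set D := (d * e / b).gcd (N / b) with hD
    have hdD : d ∣ D := Nat.dvd_gcd hdA hdNb
    set k := D / d with hk
    have hDk : D = d * k := (Nat.mul_div_cancel' hdD).symm
    have hke' : k ∣ e' := by
      have : d * k ∣ d * e' := by rw [← hDk, ← hae]; exact Nat.gcd_dvd_left _ _
      exact (mul_dvd_mul_iff_left hd0).mp this
    have hbk : b * k ∣ b := by
      have h1 : b * k ∣ e := by rw [hee']; exact mul_dvd_mul dvd_rfl hke'
      have h2 : b * k ∣ N / d := by
        rw [Nat.dvd_div_iff_mul_dvd hdN]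
        have : D ∣ N / b := Nat.gcd_dvd_right _ _
        have hbD : b * D ∣ N := (Nat.dvd_div_iff_mul_dvd hbN).mp this
        calc d * (b * k) = b * (d * k) := by ring
        _ = b * D := by rw [← hDk]
        _ ∣ N := hbD
      have := Nat.dvd_gcd h1 h2
      rwa [← hb] at this
    have hk1 : k = 1 := by
      have : b * k ∣ b * 1 := by simpa using hbk
      exact Nat.dvd_one.mp ((mul_dvd_mul_iff_left hb0).mp this)
    have hDd : D = d := by rw [hDk, hk1, mul_one]
    have habb : d * e / b * b = d * e := Nat.div_mul_cancel (hbe.mul_left d)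
    have hgoal : (⟨D, d * e / b * b / D⟩ : (_ : ℕ) × ℕ) = ⟨d, e⟩ := by
      rw [hDd, habb, Nat.mul_div_cancel_left _ (Nat.pos_of_ne_zero hd0)]
    exact hgoal
  -- values
  · rintro ⟨a, b⟩ hp
    simp only [Finset.mem_product, Nat.mem_divisors] at hp
    obtain ⟨⟨ha, -⟩, ⟨hb, -⟩⟩ := hp
    have hda : a.gcd (N / b) ∣ a := Nat.gcd_dvd_left _ _
    have hdab : a.gcd (N / b) ∣ a * b := hda.mul_right b
    rw [← hF, ← hF, Nat.mul_div_cancel' hdab]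

lemma cpow_nat_mul (a b : ℕ) (s : ℂ) : ((a * b : ℕ) : ℂ) ^ s = (a : ℂ) ^ s * (b : ℂ) ^ s := by
  push_cast
  exact Complex.natCast_mul_natCast_cpow a b s

lemma tauw_eq' (w : ℂ) (k : ℕ) (hk0 : k ≠ 0) :
    tauw w k = (k : ℂ) ^ (-w) * ∑ d ∈ k.divisors, (d : ℂ) ^ (2 * w) := by
  rw [tauw, Finset.mul_sum]
  refine Finset.sum_congr rfl fun d hd => ?_
  obtain ⟨hdk, -⟩ := Nat.mem_divisors.mp hd
  have hd0 : d ≠ 0 := fun h => hk0 (by simpa [h] using hdk)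
  have hd0' : (d : ℂ) ≠ 0 := Nat.cast_ne_zero.mpr hd0
  have hkk : d * (k / d) = k := Nat.mul_div_cancel' hdk
  have h1 : ((k : ℕ) : ℂ) ^ (-w) = (d : ℂ) ^ (-w) * ((k / d : ℕ) : ℂ) ^ (-w) := by
    conv_lhs => rw [← hkk]
    rw [cpow_nat_mul]
  have h2 : (d : ℂ) ^ (-w) * (d : ℂ) ^ (2 * w) = (d : ℂ) ^ w := by
    rw [← Complex.cpow_add _ _ hd0', show -w + 2 * w = w from by ring]
  rw [h1]
  linear_combination (-(((k / d : ℕ) : ℂ) ^ (-w))) * h2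

lemma hecke_tauw (w : ℂ) (M N : ℕ) (hM : M ≠ 0) (hN : N ≠ 0) :
    tauw w M * tauw w N = ∑ d ∈ (M.gcd N).divisors, tauw w (M * N / d ^ 2) := by
  have hMN : M * N ≠ 0 := mul_ne_zero hM hN
  have h := hecke_nat M N hM hN (fun a => (a : ℂ) ^ (2 * w)) (fun a b => cpow_nat_mul a b _)
  rw [tauw_eq' w M hM, tauw_eq' w N hN]
  calc ((M : ℂ) ^ (-w) * ∑ a ∈ M.divisors, (a : ℂ) ^ (2 * w))
        * ((N : ℂ) ^ (-w) * ∑ b ∈ N.divisors, (b : ℂ) ^ (2 * w))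
      = (M : ℂ) ^ (-w) * (N : ℂ) ^ (-w)
        * ((∑ a ∈ M.divisors, (a : ℂ) ^ (2 * w)) * ∑ b ∈ N.divisors, (b : ℂ) ^ (2 * w)) := by
        ring
    _ = (M : ℂ) ^ (-w) * (N : ℂ) ^ (-w)
        * ∑ d ∈ (M.gcd N).divisors, ∑ e ∈ (M * N / d ^ 2).divisors,
            (d : ℂ) ^ (2 * w) * (e : ℂ) ^ (2 * w) := by rw [h]
    _ = ∑ d ∈ (M.gcd N).divisors, tauw w (M * N / d ^ 2) := by
        rw [Finset.mul_sum]
        refine Finset.sum_congr rfl fun d hd => ?_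
        obtain ⟨hdg, -⟩ := Nat.mem_divisors.mp hd
        have hdM : d ∣ M := hdg.trans (Nat.gcd_dvd_left _ _)
        have hdN : d ∣ N := hdg.trans (Nat.gcd_dvd_right _ _)
        have hd0 : d ≠ 0 := fun h0 => hM (by simpa [h0] using hdM)
        have hd0' : (d : ℂ) ≠ 0 := Nat.cast_ne_zero.mpr hd0
        have hd2MN : d ^ 2 ∣ M * N := by rw [pow_two]; exact mul_dvd_mul hdM hdN
        have hX0 : M * N / d ^ 2 ≠ 0 :=
          (Nat.div_pos (Nat.le_of_dvd (Nat.pos_of_ne_zero hMN) hd2MN)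
            (Nat.pos_of_ne_zero (by positivity))).ne'
        have e2 : d * d * (M * N / d ^ 2) = M * N := by
          rw [← pow_two]; exact Nat.mul_div_cancel' hd2MN
        have e3 : ((M : ℕ) : ℂ) ^ (-w) * ((N : ℕ) : ℂ) ^ (-w) = ((M * N : ℕ) : ℂ) ^ (-w) :=
          (cpow_nat_mul M N _).symm
        have key : ((M * N : ℕ) : ℂ) ^ (-w)
            = (d : ℂ) ^ (-w) * (d : ℂ) ^ (-w) * ((M * N / d ^ 2 : ℕ) : ℂ) ^ (-w) := by
          conv_lhs => rw [← e2]
          rw [cpow_nat_mul, cpow_nat_mul]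
        have unit : (d : ℂ) ^ (-w) * (d : ℂ) ^ (-w) * (d : ℂ) ^ (2 * w) = 1 := by
          rw [← Complex.cpow_add _ _ hd0', ← Complex.cpow_add _ _ hd0',
            show -w + -w + 2 * w = 0 from by ring, Complex.cpow_zero]
        have hXd : ((M * N / d ^ 2 : ℕ) : ℂ) ^ (-w)
            = (M : ℂ) ^ (-w) * (N : ℂ) ^ (-w) * (d : ℂ) ^ (2 * w) := by
          rw [e3, key]
          linear_combination (-(((M * N / d ^ 2 : ℕ) : ℂ) ^ (-w))) * unit
        rw [tauw_eq' w _ hX0, hXd, Finset.mul_sum, Finset.mul_sum]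
        refine Finset.sum_congr rfl fun e he => ?_
        ring

/-- For a prime `q`, `w ∈ ℂ`, and positive integers `m, n` with `q ∤ n`:
`τ_w^{(q)}(m)·τ_w^{(q)}(n) = ∑_{d ∣ gcd(m,n)} τ_w^{(q)}(mn/d²)`. -/
theorem stmt_4 (q : ℕ) (hq : q.Prime) (w : ℂ) (m n : ℕ)
    (hm : 1 ≤ m) (hn : 1 ≤ n) (hqn : ¬ q ∣ n) :
    tauwq w q m * tauwq w q n = ∑ d ∈ (m.gcd n).divisors, tauwq w q (m * n / d ^ 2) := by
  have hm0 : m ≠ 0 := by omega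
  have hn0 : n ≠ 0 := by omega
  have hqcopn : Nat.Coprime q n := (Nat.Prime.coprime_iff_not_dvd hq).mpr hqn
  have hnq1 : n.gcd q = 1 := hqcopn.symm
  have htn : tauwq w q n = tauw w n := by rw [tauwq, hnq1, Nat.div_one]
  set m₁ := m / m.gcd q with hm₁
  have hm₁0 : m₁ ≠ 0 :=
    (Nat.div_pos (Nat.le_of_dvd (Nat.pos_of_ne_zero hm0) (Nat.gcd_dvd_left _ _))
      (Nat.gcd_pos_of_pos_left _ (Nat.pos_of_ne_zero hm0))).ne'
  have htm : tauwq w q m = tauw w m₁ := rfl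
  by_cases hqm : q ∣ m
  · -- q divides m
    have hgmq : m.gcd q = q := Nat.gcd_eq_right hqm
    have hmq : m = q * m₁ := by rw [hm₁, hgmq, Nat.mul_div_cancel' hqm]
    have hgcd : m.gcd n = m₁.gcd n := by
      rw [hmq, mul_comm, Nat.Coprime.gcd_mul_right_cancel m₁ hqcopn]
    have hterm : ∀ d ∈ (m.gcd n).divisors, tauwq w q (m * n / d ^ 2) = tauw w (m₁ * n / d ^ 2) := by
      intro d hd
      obtain ⟨hdg, -⟩ := Nat.mem_divisors.mp hd
      rw [hgcd] at hdg
      have hd2 : d ^ 2 ∣ m₁ * n := by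
        rw [pow_two]
        exact mul_dvd_mul (hdg.trans (Nat.gcd_dvd_left _ _)) (hdg.trans (Nat.gcd_dvd_right _ _))
      have hsplit : m * n / d ^ 2 = q * (m₁ * n / d ^ 2) := by
        rw [hmq, mul_assoc, Nat.mul_div_assoc q hd2]
      have hgq : (q * (m₁ * n / d ^ 2)).gcd q = q := Nat.gcd_eq_right (dvd_mul_right q _)
      rw [tauwq, hsplit, hgq, Nat.mul_div_cancel_left _ hq.pos]
    rw [htm, htn, Finset.sum_congr rfl hterm, hgcd]
    exact hecke_tauw w m₁ n hm₁0 hn0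
  · -- q does not divide m
    have hgmq : m.gcd q = 1 := ((Nat.Prime.coprime_iff_not_dvd hq).mpr hqm).symm
    have hmm₁ : m₁ = m := by rw [hm₁, hgmq, Nat.div_one]
    have hterm : ∀ d ∈ (m.gcd n).divisors, tauwq w q (m * n / d ^ 2) = tauw w (m * n / d ^ 2) := by
      intro d hd
      obtain ⟨hdg, -⟩ := Nat.mem_divisors.mp hd
      have hd2 : d ^ 2 ∣ m * n := by
        rw [pow_two]
        exact mul_dvd_mul (hdg.trans (Nat.gcd_dvd_left _ _)) (hdg.trans (Nat.gcd_dvd_right _ _))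
      have hnd : ¬ q ∣ m * n / d ^ 2 := fun hc => by
        have : q ∣ m * n := hc.trans (Nat.div_dvd_of_dvd hd2)
        rcases (Nat.Prime.dvd_mul hq).mp this with h | h
        · exact hqm h
        · exact hqn h
      have : (m * n / d ^ 2).gcd q = 1 := ((Nat.Prime.coprime_iff_not_dvd hq).mpr hnd).symm
      rw [tauwq, this, Nat.div_one]
    rw [htm, htn, hmm₁, Finset.sum_congr rfl hterm]
    exact hecke_tauw w m n hm0 hn0
end

section
/- Let p be a prime, α, β ≥ 0 real numbers, and C, C′ > 0. Let ν, b : ℤ≥1 → ℂ satisfy |ν(n)| ≤ C·n^α and |b(n)| ≤ C′·n^β for all n ≥ 1. Suppose λ ∈ ℂ satisfies ν(n)·λ = ν(n·p) + 1_{p|n}·ν(n/p) for all n ≥ 1, and that b(n)·b(p) = b(n·p) + 1_{p|n}·b(n/p) for all n ≥ 1. Then for every s ∈ ℂ with Re s > 1 + α + β, the series Σ_{n≥1} b(n)ν(n)n^{−s}, Σ_{n≥1} b(n)ν(n·p)n^{−s} converge absolutely, and λ·Σ_{n≥1} b(n)ν(n)n^{−s} = b(p)·p^{−s}·Σ_{n≥1}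 b(n)ν(n)n^{−s} + (1 − p^{−2s})·Σ_{n≥1} b(n)ν(n·p)n^{−s}. -/
open Complex Function

/-- Master summability lemma. -/
lemma sum_aux (f : ℕ → ℂ) (K γ : ℝ) (hK : 0 ≤ K) (hγ : 0 ≤ γ)
    (hf : ∀ n : ℕ, 1 ≤ n → ‖f n‖ ≤ K * (n : ℝ) ^ γ) (s : ℂ) (hs : 1 + γ < s.re) :
    Summable (fun n : ℕ => ‖f n * (n : ℂ) ^ (-s)‖) := by
  have hlt : γ - s.re < -1 := by linarith
  have hsum : Summable (fun n : ℕ => K * (n : ℝ) ^ (γ - s.re)) :=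
    (Real.summable_nat_rpow.2 hlt).mul_left K
  refine hsum.of_nonneg_of_le (fun n => norm_nonneg _) (fun n => ?_)
  rcases Nat.eq_zero_or_pos n with rfl | hn
  · simp only [Nat.cast_zero]
    rw [Complex.zero_cpow (by intro h; rw [neg_eq_zero] at h; subst h; simp at hs; linarith),
      mul_zero, norm_zero]
    positivity
  · rw [norm_mul, Complex.norm_natCast_cpow_of_pos hn, neg_re]
    have hn1 : (1:ℝ) ≤ (n:ℝ) := by exact_mod_cast hn
    calc ‖f n‖ * (n:ℝ) ^ (-s.re) ≤ (K * (n:ℝ)^γ) * (n:ℝ)^(-s.re) := by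
          apply mul_le_mul_of_nonneg_right (hf n hn) (Real.rpow_nonneg (by linarith) _)
      _ = K * (n:ℝ) ^ (γ - s.re) := by
          rw [mul_assoc, ← Real.rpow_add (by linarith)]; ring_nf

set_option maxHeartbeats 1000000


/-- Hecke-relation manipulation of a twisted Dirichlet series: if `ν` satisfies
`ν(n)·λ = ν(np) + 1_{p∣n}·ν(n/p)` and `b` satisfies the Hecke relation at `p`,
with polynomial bounds, then for `Re s > 1 + α + β` the relevant series converge
absolutely and
`λ·∑ b(n)ν(n)n^{−s} = b(p)p^{−s}·∑ b(n)ν(n)n^{−s} + (1−p^{−2s})·∑ b(n)ν(np)n^{−s}`. -/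
theorem stmt_5 (p : ℕ) (hp : p.Prime) (α β : ℝ) (hα : 0 ≤ α) (hβ : 0 ≤ β)
    (C C' : ℝ) (hC : 0 < C) (hC' : 0 < C')
    (ν b : ℕ → ℂ) (lam : ℂ)
    (hν : ∀ n : ℕ, 1 ≤ n → ‖ν n‖ ≤ C * (n : ℝ) ^ α)
    (hb : ∀ n : ℕ, 1 ≤ n → ‖b n‖ ≤ C' * (n : ℝ) ^ β)
    (hhecke : ∀ n : ℕ, 1 ≤ n → ν n * lam = ν (n * p) + (if p ∣ n then ν (n / p) else 0))
    (hheckeb : ∀ n : ℕ, 1 ≤ n → b n * b p = b (n * p) + (if p ∣ n then b (n / p) else 0))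
    (s : ℂ) (hs : 1 + α + β < s.re) :
    Summable (fun n : ℕ => ‖b (n + 1) * ν (n + 1) * (((n + 1 : ℕ) : ℂ)) ^ (-s)‖) ∧
    Summable (fun n : ℕ => ‖b (n + 1) * ν ((n + 1) * p) * (((n + 1 : ℕ) : ℂ)) ^ (-s)‖) ∧
    lam * ∑' n : ℕ, b (n + 1) * ν (n + 1) * (((n + 1 : ℕ) : ℂ)) ^ (-s)
      = b p * (p : ℂ) ^ (-s) * ∑' n : ℕ, b (n + 1) * ν (n + 1) * (((n + 1 : ℕ) : ℂ)) ^ (-s)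
        + (1 - (p : ℂ) ^ (-(2 * s))) *
            ∑' n : ℕ, b (n + 1) * ν ((n + 1) * p) * (((n + 1 : ℕ) : ℂ)) ^ (-s) := by
  have hp0 : ((p:ℕ) : ℂ) ≠ 0 := by exact_mod_cast hp.pos.ne'
  have hsab : 1 + (α + β) < s.re := by linarith
  have hns : -s ≠ 0 := by
    intro h; rw [neg_eq_zero] at h; subst h; simp at hs; linarith
  have h0 : ((0:ℕ):ℂ) ^ (-s) = 0 := by
    rw [Nat.cast_zero, Complex.zero_cpow hns]
  -- core functions
  set F : ℕ → ℂ := fun n => b n * ν n * (n : ℂ) ^ (-s) with hF_def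
  set G : ℕ → ℂ := fun n => b n * ν (n * p) * (n : ℂ) ^ (-s) with hG_def
  set H : ℕ → ℂ := fun n => (if p ∣ n then b n * ν (n / p) else 0) * (n : ℂ) ^ (-s) with hH_def
  set KK : ℕ → ℂ := fun m => b (m * p) * ν m * (m : ℂ) ^ (-s) with hK_def
  set J : ℕ → ℂ := fun m => (if p ∣ m then b (m / p) else 0) * ν m * (m : ℂ) ^ (-s) with hJ_def
  -- generic product bound
  have hdivle : ∀ n : ℕ, ((n / p : ℕ) : ℝ) ^ α ≤ (n:ℝ) ^ α := fun n =>
    Real.rpow_le_rpow (by positivity) (by exact_mod_cast Nat.div_le_self n p) hα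
  have hdivleβ : ∀ n : ℕ, ((n / p : ℕ) : ℝ) ^ β ≤ (n:ℝ) ^ β := fun n =>
    Real.rpow_le_rpow (by positivity) (by exact_mod_cast Nat.div_le_self n p) hβ
  have hdiv1 : ∀ n : ℕ, 1 ≤ n → p ∣ n → 1 ≤ n / p :=
    fun n hn hd => (Nat.one_le_div_iff hp.pos).2 (Nat.le_of_dvd hn hd)
  have hrpadd : ∀ n : ℕ, 1 ≤ n → (n:ℝ) ^ (α + β) = (n:ℝ)^α * (n:ℝ)^β := by
    intro n hn
    have hn0 : (0:ℝ) < (n:ℝ) := by exact_mod_cast hn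
    rw [Real.rpow_add hn0]
  -- summabilities
  have hFs : Summable (fun n => ‖F n‖) := by
    apply sum_aux (fun n => b n * ν n) (C' * C) (α + β) (by positivity) (by linarith) _ s hsab
    intro n hn
    rw [norm_mul, hrpadd n hn]
    calc ‖b n‖ * ‖ν n‖ ≤ (C' * (n:ℝ)^β) * (C * (n:ℝ)^α) :=
          mul_le_mul (hb n hn) (hν n hn) (norm_nonneg _) (by positivity)
      _ = C' * C * ((n:ℝ)^α * (n:ℝ)^β) := by ring
  have hGs : Summable (fun n => ‖G n‖) := by
    apply sum_aux (fun n => b n * ν (n * p)) (C' * (C * (p:ℝ)^α)) (α + β)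
      (by positivity) (by linarith) _ s hsab
    intro n hn
    have hnp : 1 ≤ n * p := Nat.one_le_iff_ne_zero.2 (Nat.mul_ne_zero (by omega) hp.pos.ne')
    rw [norm_mul, hrpadd n hn]
    have hν' : ‖ν (n * p)‖ ≤ C * (p:ℝ)^α * (n:ℝ)^α := by
      calc ‖ν (n * p)‖ ≤ C * ((n*p : ℕ):ℝ) ^ α := hν _ hnp
        _ = C * (p:ℝ)^α * (n:ℝ)^α := by
            push_cast
            rw [Real.mul_rpow (by positivity) (by positivity)]; ring
    calc ‖b n‖ * ‖ν (n * p)‖ ≤ (C' * (n:ℝ)^β) * (C * (p:ℝ)^α * (n:ℝ)^α) :=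
          mul_le_mul (hb n hn) hν' (norm_nonneg _) (by positivity)
      _ = C' * (C * (p:ℝ)^α) * ((n:ℝ)^α * (n:ℝ)^β) := by ring
  have hHs : Summable (fun n => ‖H n‖) := by
    apply sum_aux _ (C' * C) (α + β) (by positivity) (by linarith) _ s hsab
    intro n hn
    by_cases hd : p ∣ n
    · simp only [if_pos hd]
      rw [norm_mul, hrpadd n hn]
      calc ‖b n‖ * ‖ν (n / p)‖ ≤ (C' * (n:ℝ)^β) * (C * (n:ℝ)^α) := by
            apply mul_le_mul (hb n hn) _ (norm_nonneg _) (by positivity)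
            exact (hν _ (hdiv1 n hn hd)).trans
              (mul_le_mul_of_nonneg_left (hdivle n) hC.le)
        _ = C' * C * ((n:ℝ)^α * (n:ℝ)^β) := by ring
    · simp only [if_neg hd, zero_mul, norm_zero]
      positivity
  have hKs : Summable (fun m => ‖KK m‖) := by
    apply sum_aux (fun m => b (m * p) * ν m) (C' * (p:ℝ)^β * C) (α + β)
      (by positivity) (by linarith) _ s hsab
    intro n hn
    have hnp : 1 ≤ n * p := Nat.one_le_iff_ne_zero.2 (Nat.mul_ne_zero (by omega) hp.pos.ne')
    rw [norm_mul, hrpadd n hn]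
    have hb' : ‖b (n * p)‖ ≤ C' * (p:ℝ)^β * (n:ℝ)^β := by
      calc ‖b (n * p)‖ ≤ C' * ((n*p : ℕ):ℝ) ^ β := hb _ hnp
        _ = C' * (p:ℝ)^β * (n:ℝ)^β := by
            push_cast
            rw [Real.mul_rpow (by positivity) (by positivity)]; ring
    calc ‖b (n * p)‖ * ‖ν n‖ ≤ (C' * (p:ℝ)^β * (n:ℝ)^β) * (C * (n:ℝ)^α) :=
          mul_le_mul hb' (hν n hn) (norm_nonneg _) (by positivity)
      _ = C' * (p:ℝ)^β * C * ((n:ℝ)^α * (n:ℝ)^β) := by ring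
  have hJs : Summable (fun m => ‖J m‖) := by
    apply sum_aux _ (C' * C) (α + β) (by positivity) (by linarith) _ s hsab
    intro n hn
    by_cases hd : p ∣ n
    · simp only [if_pos hd]
      rw [norm_mul, hrpadd n hn]
      calc ‖b (n / p)‖ * ‖ν n‖ ≤ (C' * (n:ℝ)^β) * (C * (n:ℝ)^α) := by
            apply mul_le_mul _ (hν n hn) (norm_nonneg _) (by positivity)
            exact (hb _ (hdiv1 n hn hd)).trans
              (mul_le_mul_of_nonneg_left (hdivleβ n) hC'.le)
        _ = C' * C * ((n:ℝ)^α * (n:ℝ)^β) := by ring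
    · simp only [if_neg hd, zero_mul, norm_zero]
      positivity
  -- reindexing tools
  have hinj : Function.Injective (fun m : ℕ => m * p) :=
    fun a c h => Nat.eq_of_mul_eq_mul_right hp.pos h
  have cpow_mul_nat : ∀ m : ℕ, ((m * p : ℕ):ℂ) ^ (-s) = (m:ℂ) ^ (-s) * (p:ℂ) ^ (-s) := by
    intro m
    rw [Nat.cast_mul]
    exact Complex.natCast_mul_natCast_cpow m p (-s)
  -- pointwise identities
  have key1 : ∀ n : ℕ, lam * F n = G n + H n := by
    intro n
    rcases Nat.eq_zero_or_pos n with rfl | hn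
    · simp only [hF_def, hG_def, hH_def, h0, mul_zero, zero_add, zero_mul, add_zero]
    · simp only [hF_def, hG_def, hH_def]
      have h := hhecke n hn
      calc lam * (b n * ν n * (n:ℂ)^(-s)) = b n * (ν n * lam) * (n:ℂ)^(-s) := by ring
        _ = b n * (ν (n*p) + (if p ∣ n then ν (n/p) else 0)) * (n:ℂ)^(-s) := by rw [h]
        _ = b n * ν (n * p) * (n:ℂ)^(-s)
            + (if p ∣ n then b n * ν (n / p) else 0) * (n:ℂ)^(-s) := by
            by_cases hd : p ∣ n <;> simp [hd] <;> ring
  have key2 : ∀ m : ℕ, H (m * p) = KK m * (p:ℂ) ^ (-s) := by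
    intro m
    simp only [hH_def, hK_def]
    rw [if_pos (dvd_mul_left p m), Nat.mul_div_cancel m hp.pos, cpow_mul_nat m]
    ring
  have key3 : ∀ m : ℕ, KK m = b p * F m - J m := by
    intro m
    rcases Nat.eq_zero_or_pos m with rfl | hm
    · simp only [hK_def, hF_def, hJ_def, h0, mul_zero, zero_mul, sub_zero]
    · simp only [hK_def, hF_def, hJ_def]
      have h := hheckeb m hm
      have hb' : b (m * p) = b m * b p - (if p ∣ m then b (m / p) else 0) := by
        rw [eq_sub_iff_add_eq, ← h]
      rw [hb']
      ring
  have key4 : ∀ k : ℕ, J (k * p) = G k * (p:ℂ) ^ (-s) := by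
    intro k
    simp only [hJ_def, hG_def]
    rw [if_pos (dvd_mul_left p k), Nat.mul_div_cancel k hp.pos, cpow_mul_nat k]
    ring
  -- support conditions
  have hsuppH : Function.support H ⊆ Set.range (fun m : ℕ => m * p) := by
    intro n hn
    by_cases hd : p ∣ n
    · obtain ⟨m, rfl⟩ := hd; exact ⟨m, mul_comm m p⟩
    · exfalso; apply hn; simp only [hH_def, if_neg hd, zero_mul]
  have hsuppJ : Function.support J ⊆ Set.range (fun m : ℕ => m * p) := by
    intro n hn
    by_cases hd : p ∣ n
    · obtain ⟨m, rfl⟩ := hd; exact ⟨m, mul_comm m p⟩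
    · exfalso; apply hn; simp only [hJ_def, if_neg hd, zero_mul, mul_zero]
  -- tsum computations
  have eq1 : lam * ∑' n, F n = (∑' n, G n) + ∑' n, H n := by
    calc lam * ∑' n, F n = ∑' n, lam * F n := tsum_mul_left.symm
      _ = ∑' n, (G n + H n) := tsum_congr key1
      _ = (∑' n, G n) + ∑' n, H n := Summable.tsum_add hGs.of_norm hHs.of_norm
  have eq2 : ∑' n, H n = (∑' m, KK m) * (p:ℂ) ^ (-s) := by
    calc ∑' n, H n = ∑' m, H (m * p) := (Function.Injective.tsum_eq hinj hsuppH).symm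
      _ = ∑' m, KK m * (p:ℂ) ^ (-s) := tsum_congr key2
      _ = (∑' m, KK m) * (p:ℂ) ^ (-s) := tsum_mul_right
  have eq3 : ∑' m, KK m = b p * (∑' n, F n) - ∑' m, J m := by
    calc ∑' m, KK m = ∑' m, (b p * F m - J m) := tsum_congr key3
      _ = (∑' m, b p * F m) - ∑' m, J m :=
          Summable.tsum_sub (hFs.of_norm.mul_left (b p)) hJs.of_norm
      _ = b p * (∑' n, F n) - ∑' m, J m := by rw [tsum_mul_left]
  have eq4 : ∑' m, J m = (∑' n, G n) * (p:ℂ) ^ (-s) := by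
    calc ∑' m, J m = ∑' k, J (k * p) := (Function.Injective.tsum_eq hinj hsuppJ).symm
      _ = ∑' k, G k * (p:ℂ) ^ (-s) := tsum_congr key4
      _ = (∑' n, G n) * (p:ℂ) ^ (-s) := tsum_mul_right
  have hq2 : (p:ℂ) ^ (-(2 * s)) = (p:ℂ) ^ (-s) * (p:ℂ) ^ (-s) := by
    rw [show -(2 * s) = -s + -s by ring, Complex.cpow_add _ _ hp0]
  -- relate to shifted sums
  have eqF : (∑' n : ℕ, b (n + 1) * ν (n + 1) * (((n + 1 : ℕ) : ℂ)) ^ (-s)) = ∑' n, F n := by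
    have hF0 : F 0 = 0 := by
      show b 0 * ν 0 * ((0:ℕ):ℂ) ^ (-s) = 0
      rw [h0, mul_zero]
    rw [Summable.tsum_eq_zero_add hFs.of_norm, hF0, zero_add]
  have eqG : (∑' n : ℕ, b (n + 1) * ν ((n + 1) * p) * (((n + 1 : ℕ) : ℂ)) ^ (-s)) = ∑' n, G n := by
    have hG0 : G 0 = 0 := by
      show b 0 * ν (0 * p) * ((0:ℕ):ℂ) ^ (-s) = 0
      rw [h0, mul_zero]
    rw [Summable.tsum_eq_zero_add hGs.of_norm, hG0, zero_add]
  refine ⟨(_root_.summable_nat_add_iff 1).2 hFs, (_root_.summable_nat_add_iff 1).2 hGs, ?_⟩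
  rw [eqF, eqG, eq1, eq2, eq3, eq4, hq2]
  ring
end

section
/- Let J ≥ 1 be an integer, A > 0, C > 0, and let φ : [0,∞) → ℂ be of class C^J with φ^{(j)}(0) = 0 and |φ^{(j)}(x)| ≤ C·(1+x)^{−A} for all x ≥ 0 and all 0 ≤ j ≤ J. Then for every fixed ξ ∈ ℝ with −J < ξ < A − J, the Mellin transform φ̃(u) = ∫_0^∞ t^{u−1}·φ(t) dt converges absolutely for all u with Re u = ξ, and there exists a constant C′ = C′(ξ, J, A, C) such that |φ̃(ξ + it)| ≤ C′·(1 + |t|)^{−J} for all t ∈ ℝ. -/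
/-!
Integrating by parts, `mellin f s = -mellin f' (s + 1) / s`: moving the `J` derivatives onto `φ`
gains a factor `|s + j|⁻¹ ≤ |t|⁻¹` at each step, and for `|t| < 1` the trivial bound suffices.
The boundary terms vanish and all the Mellin integrals converge because `φ^{(j)}(x) = O(x^{J-j})`
at `0` (mean value theorem, using `φ^{(i)}(0) = 0` for `i < J`) and `φ^{(j)}(x) = O(x^{-A})` at
`∞`, and `-J < ξ < A - J` is exactly the strip where both bounds are integrable against
`x^{ξ + j - 1}`.
-/

open MeasureTheory Set Filter Asymptotics Topology Complex

section IteratedDerivWithin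

variable {E : Type*} [NormedAddCommGroup E] [NormedSpace ℝ E]

theorem ContDiffOn.hasDerivWithinAt_iteratedDerivWithin {f : ℝ → E} {s : Set ℝ} {n j : ℕ}
    (hf : ContDiffOn ℝ n f s) (hs : UniqueDiffOn ℝ s) (hj : j < n) {x : ℝ} (hx : x ∈ s) :
    HasDerivWithinAt (iteratedDerivWithin j f s) (iteratedDerivWithin (j + 1) f s x) s x := by
  rw [iteratedDerivWithin_succ]
  exact (hf.differentiableOn_iteratedDerivWithin (mod_cast hj) hs x hx).hasDerivWithinAt

theorem norm_le_mul_pow_succ_of_norm_deriv_le {f f' : ℝ → E} {K x : ℝ} {k : ℕ} (hK : 0 ≤ K)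
    (hx : 0 ≤ x) (hf0 : f 0 = 0) (hf : ∀ y ∈ Icc 0 x, HasDerivWithinAt f (f' y) (Icc 0 x) y)
    (hf' : ∀ y ∈ Icc 0 x, ‖f' y‖ ≤ K * y ^ k) : ‖f x‖ ≤ K * x ^ (k + 1) := by
  have hmvt := norm_image_sub_le_of_norm_deriv_le_segment' hf
    (fun y hy => (hf' y (Ico_subset_Icc_self hy)).trans
      (mul_le_mul_of_nonneg_left (pow_le_pow_left₀ hy.1 hy.2.le k) hK)) x ⟨hx, le_rfl⟩
  rw [hf0, sub_zero, sub_zero] at hmvt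
  rw [pow_succ, ← mul_assoc]
  exact hmvt

theorem norm_iteratedDerivWithin_Ici_le_mul_pow {f : ℝ → E} {n j : ℕ} {K : ℝ}
    (hf : ContDiffOn ℝ n f (Ici 0)) (h0 : ∀ i < n, iteratedDerivWithin i f (Ici 0) 0 = 0)
    (hK : ∀ x, 0 ≤ x → ‖iteratedDerivWithin n f (Ici 0) x‖ ≤ K) (hj : j ≤ n) {x : ℝ}
    (hx : 0 ≤ x) : ‖iteratedDerivWithin j f (Ici 0) x‖ ≤ K * x ^ (n - j) := by
  have hK0 : 0 ≤ K := (norm_nonneg _).trans (hK 0 le_rfl)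
  induction hj using Nat.decreasingInduction generalizing x with
  | self => simpa using hK x hx
  | of_succ j hj ih =>
    rw [show n - j = n - (j + 1) + 1 by omega]
    refine norm_le_mul_pow_succ_of_norm_deriv_le hK0 hx (h0 j hj) (fun y hy => ?_)
      (fun y hy => ih hy.1)
    exact (hf.hasDerivWithinAt_iteratedDerivWithin (uniqueDiffOn_Ici 0) hj hy.1).mono
      Icc_subset_Ici_self

theorem iteratedDerivWithin_Ici_isBigO_nhdsGT_zero {f : ℝ → E} {n j : ℕ} {K : ℝ}
    (hf : ContDiffOn ℝ n f (Ici 0)) (h0 : ∀ i < n, iteratedDerivWithin i f (Ici 0) 0 = 0)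
    (hK : ∀ x, 0 ≤ x → ‖iteratedDerivWithin n f (Ici 0) x‖ ≤ K) (hj : j ≤ n) :
    iteratedDerivWithin j f (Ici 0) =O[𝓝[>] 0] (· ^ (-((j : ℝ) - n))) := by
  refine IsBigO.of_bound K (eventually_nhdsWithin_of_forall fun x (hx : 0 < x) => ?_)
  rw [neg_sub, ← Nat.cast_sub hj, Real.rpow_natCast, Real.norm_of_nonneg (by positivity)]
  exact norm_iteratedDerivWithin_Ici_le_mul_pow hf h0 hK hj hx.le

end IteratedDerivWithin

theorem isBigO_atTop_rpow_neg_of_norm_le {E : Type*} [NormedAddCommGroup E] {g : ℝ → E}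
    {C A : ℝ} (hA : 0 ≤ A)
    (hg : ∀ x, 0 ≤ x → ‖g x‖ ≤ C * (1 + x) ^ (-A)) : g =O[atTop] (· ^ (-A)) := by
  refine (IsBigO.of_bound C ?_).trans (IsBigO.of_bound 1 ?_) (g := fun x => (1 + x) ^ (-A))
  · filter_upwards [eventually_ge_atTop 0] with x hx
    rw [Real.norm_of_nonneg (by positivity)]
    exact hg x hx
  · filter_upwards [eventually_gt_atTop 0] with x hx
    rw [one_mul, Real.norm_of_nonneg (by positivity), Real.norm_of_nonneg (by positivity)]
    exact Real.rpow_le_rpow_of_nonpos hx (by linarith) (by linarith)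

theorem tendsto_cpow_mul_of_isBigO_rpow {f : ℝ → ℂ} {l : Filter ℝ} {b : ℝ} {s : ℂ}
    (hl : ∀ᶠ x in l, 0 < x) (hf : f =O[l] (· ^ (-b)))
    (hlim : Tendsto (fun x : ℝ => x ^ (s.re - b)) l (𝓝 0)) :
    Tendsto (fun x : ℝ => (x : ℂ) ^ s * f x) l (𝓝 0) := by
  have hs : (fun x : ℝ => (x : ℂ) ^ s) =O[l] (· ^ s.re) :=
    IsBigO.of_bound 1 (hl.mono fun x hx => by
      rw [norm_cpow_eq_rpow_re_of_pos hx, Real.norm_of_nonneg (Real.rpow_nonneg hx.le _), one_mul])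
  refine ((hs.mul hf).congr' EventuallyEq.rfl (hl.mono fun x hx => ?_)).trans_tendsto hlim
  dsimp only
  rw [← Real.rpow_add hx, sub_eq_add_neg]

theorem mellin_eq_neg_mellin_deriv_div {f f' : ℝ → ℂ} {s : ℂ} {a b : ℝ} (hs : s ≠ 0)
    (hf : ∀ x ∈ Ioi (0 : ℝ), HasDerivAt f (f' x) x)
    (hf_top : f =O[atTop] (· ^ (-a))) (hs_top : s.re < a)
    (hf_bot : f =O[𝓝[>] 0] (· ^ (-b))) (hs_bot : b < s.re)
    (hf' : MellinConvergent f' (s + 1)) :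
    mellin f s = -mellin f' (s + 1) / s := by
  have hfs : MellinConvergent f s := mellinConvergent_of_isBigO_rpow
    (ContinuousOn.locallyIntegrableOn (fun x hx => (hf x hx).continuousAt.continuousWithinAt)
      measurableSet_Ioi) hf_top hs_top hf_bot hs_bot
  have hpow : ∀ x ∈ Ioi (0 : ℝ), HasDerivAt (fun y : ℝ => (y : ℂ) ^ s) (s * (x : ℂ) ^ (s - 1)) x :=
    fun x hx => hasDerivAt_ofReal_cpow_const (ne_of_gt hx) hs
  have hparts := integral_Ioi_mul_deriv_eq_deriv_mul hpow hf
    (by simpa [MellinConvergent, Pi.mul_def] using hf')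
    ((hfs.const_smul s).congr_fun (fun x _ => by simp only [smul_eq_mul, Pi.mul_apply]; ring)
      measurableSet_Ioi)
    (tendsto_cpow_mul_of_isBigO_rpow self_mem_nhdsWithin hf_bot
      ((Real.continuousAt_rpow_const _ _ (Or.inr (by linarith))).tendsto.mono_left
        nhdsWithin_le_nhds |>.trans_eq (by simp [Real.zero_rpow (by linarith : s.re - b ≠ 0)])))
    (tendsto_cpow_mul_of_isBigO_rpow (eventually_gt_atTop 0) hf_top
      (by simpa using tendsto_rpow_neg_atTop (by linarith : 0 < a - s.re)))
  simp only [integral_const_mul, mul_assoc, sub_zero, zero_sub] at hparts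
  simp only [mellin, smul_eq_mul, add_sub_cancel_right]
  rw [hparts]
  field_simp

theorem norm_mellin_le {E : Type*} [NormedAddCommGroup E] [NormedSpace ℂ E] (f : ℝ → E) (s : ℂ) :
    ‖mellin f s‖ ≤ ∫ x in Ioi 0, x ^ (s.re - 1) * ‖f x‖ := by
  refine (norm_integral_le_integral_norm _).trans_eq
    (setIntegral_congr_fun measurableSet_Ioi fun x hx => ?_)
  simp only [norm_smul, norm_cpow_eq_rpow_re_of_pos hx, sub_re, one_re]

theorem exists_le_mul_one_add_abs_rpow_neg {F : ℝ → ℝ} {M₀ M p : ℝ} (hp : 0 ≤ p) (hM : 0 ≤ M)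
    (h₀ : ∀ t, F t ≤ M₀) (h₁ : ∀ t, 1 ≤ |t| → F t ≤ M * |t| ^ (-p)) :
    ∃ C, ∀ t, F t ≤ C * (1 + |t|) ^ (-p) := by
  refine ⟨max M₀ M * 2 ^ p, fun t => ?_⟩
  have hmax : 0 ≤ max M₀ M := hM.trans (le_max_right _ _)
  rcases le_or_gt 1 |t| with ht | ht
  · have hdecay : |t| ^ (-p) ≤ 2 ^ p * (1 + |t|) ^ (-p) :=
      calc |t| ^ (-p) = 2 ^ p * (2 * |t|) ^ (-p) := by
            rw [Real.mul_rpow zero_le_two (abs_nonneg t), ← mul_assoc, ← Real.rpow_add two_pos]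
            simp
        _ ≤ 2 ^ p * (1 + |t|) ^ (-p) :=
            mul_le_mul_of_nonneg_left
              (Real.rpow_le_rpow_of_nonpos (by positivity) (by linarith) (by linarith))
              (by positivity)
    calc F t ≤ M * |t| ^ (-p) := h₁ t ht
      _ ≤ max M₀ M * (2 ^ p * (1 + |t|) ^ (-p)) :=
          mul_le_mul (le_max_right _ _) hdecay (by positivity) hmax
      _ = _ := by ring
  · have hone : 1 ≤ 2 ^ p * (1 + |t|) ^ (-p) :=
      calc (1 : ℝ) = 2 ^ p * 2 ^ (-p) := by rw [← Real.rpow_add two_pos]; simp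
        _ ≤ 2 ^ p * (1 + |t|) ^ (-p) :=
            mul_le_mul_of_nonneg_left
              (Real.rpow_le_rpow_of_nonpos (by positivity) (by linarith) (by linarith))
              (by positivity)
    calc F t ≤ max M₀ M := (h₀ t).trans (le_max_left _ _)
      _ ≤ max M₀ M * (2 ^ p * (1 + |t|) ^ (-p)) := le_mul_of_one_le_right hmax hone
      _ = _ := by ring

theorem exists_norm_mellin_le_mul_one_add_abs_rpow_neg {Φ : ℕ → ℝ → ℂ} {n : ℕ} {σ : ℝ}
    {a b : ℕ → ℝ} (hderiv : ∀ j < n, ∀ x ∈ Ioi (0 : ℝ), HasDerivAt (Φ j) (Φ (j + 1) x) x)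
    (hloc : LocallyIntegrableOn (Φ n) (Ioi 0))
    (htop : ∀ j ≤ n, Φ j =O[atTop] (· ^ (-a j))) (hσa : ∀ j ≤ n, σ + j < a j)
    (hbot : ∀ j ≤ n, Φ j =O[𝓝[>] 0] (· ^ (-b j))) (hσb : ∀ j ≤ n, b j < σ + j) :
    ∃ C, ∀ t : ℝ, ‖mellin (Φ 0) (σ + t * I)‖ ≤ C * (1 + |t|) ^ (-(n : ℝ)) := by
  have hconv : ∀ j ≤ n, ∀ s : ℂ, s.re = σ + j → MellinConvergent (Φ j) s := by
    intro j hj s hs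
    have hloc_j : LocallyIntegrableOn (Φ j) (Ioi 0) := by
      rcases hj.lt_or_eq with hj | rfl
      · exact ContinuousOn.locallyIntegrableOn
          (fun x hx => (hderiv j hj x hx).continuousAt.continuousWithinAt) measurableSet_Ioi
      · exact hloc
    exact mellinConvergent_of_isBigO_rpow hloc_j (htop j hj) (hs ▸ hσa j hj) (hbot j hj)
      (hs ▸ hσb j hj)
  have hstep : ∀ j < n, ∀ t : ℝ, 1 ≤ |t| → ‖mellin (Φ j) (σ + t * I + j)‖ ≤
      |t|⁻¹ * ‖mellin (Φ (j + 1)) (σ + t * I + (j + 1 : ℕ))‖ := by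
    intro j hj t ht
    set s : ℂ := σ + t * I + j
    have hre : s.re = σ + j := by simp [s]
    have him : |t| ≤ ‖s‖ := by simpa [s] using abs_im_le_norm s
    have hs0 : s ≠ 0 := norm_pos_iff.mp (by linarith)
    have hs1 : (σ + t * I + (j + 1 : ℕ) : ℂ) = s + 1 := by push_cast; ring
    rw [mellin_eq_neg_mellin_deriv_div hs0 (hderiv j hj) (htop j hj.le) (hre ▸ hσa j hj.le)
      (hbot j hj.le) (hre ▸ hσb j hj.le)
      (hconv (j + 1) hj _ (by rw [add_re, one_re, hre]; push_cast; ring)), hs1, norm_div, norm_neg,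
      div_eq_inv_mul]
    gcongr
  have hiter : ∀ t : ℝ, 1 ≤ |t| → ∀ j ≤ n,
      ‖mellin (Φ 0) (σ + t * I)‖ ≤ (|t|⁻¹) ^ j * ‖mellin (Φ j) (σ + t * I + j)‖ := by
    intro t ht j hj
    induction j with
    | zero => simp
    | succ j ih =>
      calc ‖mellin (Φ 0) (σ + t * I)‖ ≤ (|t|⁻¹) ^ j * ‖mellin (Φ j) (σ + t * I + j)‖ :=
            ih (by omega)
        _ ≤ (|t|⁻¹) ^ j * (|t|⁻¹ * ‖mellin (Φ (j + 1)) (σ + t * I + (j + 1 : ℕ))‖) := by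
            gcongr
            exact hstep j (by omega) t ht
        _ = _ := by ring
  set M : ℕ → ℝ := fun j => ∫ x in Ioi 0, x ^ (σ + j - 1) * ‖Φ j x‖
  have hM : ∀ (j : ℕ) (s : ℂ), s.re = σ + j → ‖mellin (Φ j) s‖ ≤ M j := fun j s hs =>
    (norm_mellin_le (Φ j) s).trans_eq (by rw [hs])
  have hM0 : 0 ≤ M n := setIntegral_nonneg measurableSet_Ioi
    fun x hx => mul_nonneg (Real.rpow_nonneg (le_of_lt hx) _) (norm_nonneg _)
  refine exists_le_mul_one_add_abs_rpow_neg (Nat.cast_nonneg n) hM0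
    (fun t => hM 0 _ (by simp)) (fun t ht => ?_)
  calc ‖mellin (Φ 0) (σ + t * I)‖ ≤ (|t|⁻¹) ^ n * M n :=
        (hiter t ht n le_rfl).trans (by gcongr; exact hM n _ (by simp))
    _ = M n * |t| ^ (-(n : ℝ)) := by
        rw [Real.rpow_neg (abs_nonneg t), Real.rpow_natCast, inv_pow, mul_comm]

theorem stmt_12_general (J : ℕ) (A C : ℝ) (hA : 0 < A) (hC : 0 < C)
    (φ : ℝ → ℂ) (hφ : ContDiffOn ℝ J φ (Set.Ici 0))
    (hφ0 : ∀ j : ℕ, j ≤ J → iteratedDerivWithin j φ (Set.Ici 0) 0 = 0)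
    (hφb : ∀ j : ℕ, j ≤ J → ∀ x : ℝ, 0 ≤ x →
      ‖iteratedDerivWithin j φ (Set.Ici 0) x‖ ≤ C * (1 + x) ^ (-A))
    (ξ : ℝ) (hξ1 : -(J : ℝ) < ξ) (hξ2 : ξ < A - J) :
    (∀ u : ℂ, u.re = ξ →
      MeasureTheory.IntegrableOn (fun t : ℝ => ((t : ℂ)) ^ (u - 1) * φ t) (Set.Ioi 0)) ∧
    ∃ C' : ℝ, ∀ t : ℝ,
      ‖∫ x in Set.Ioi (0 : ℝ), ((x : ℂ)) ^ (((ξ : ℂ) + (t : ℂ) * Complex.I) - 1) * φ x‖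
        ≤ C' * (1 + |t|) ^ (-(J : ℝ)) := by
  set Φ : ℕ → ℝ → ℂ := fun j => iteratedDerivWithin j φ (Ici 0)
  have hK : ∀ x, 0 ≤ x → ‖Φ J x‖ ≤ C := fun x hx => (hφb J le_rfl x hx).trans
    (mul_le_of_le_one_right hC.le
      (Real.rpow_le_one_of_one_le_of_nonpos (by linarith) (by linarith)))
  have hderiv : ∀ j < J, ∀ x ∈ Ioi (0 : ℝ), HasDerivAt (Φ j) (Φ (j + 1) x) x := fun j hj x hx =>
    (hφ.hasDerivWithinAt_iteratedDerivWithin (uniqueDiffOn_Ici 0) hj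
      (Ioi_subset_Ici_self hx)).hasDerivAt (Ici_mem_nhds hx)
  have hloc : ∀ j ≤ J, LocallyIntegrableOn (Φ j) (Ioi 0) := fun j hj =>
    ((hφ.continuousOn_iteratedDerivWithin (mod_cast hj) (uniqueDiffOn_Ici 0)).mono
      Ioi_subset_Ici_self).locallyIntegrableOn measurableSet_Ioi
  have htop : ∀ j ≤ J, Φ j =O[atTop] (· ^ (-A)) := fun j hj =>
    isBigO_atTop_rpow_neg_of_norm_le hA.le (hφb j hj)
  have hbot : ∀ j ≤ J, Φ j =O[𝓝[>] 0] (· ^ (-((j : ℝ) - J))) := fun j hj =>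
    iteratedDerivWithin_Ici_isBigO_nhdsGT_zero hφ (fun i hi => hφ0 i hi.le) hK hj
  have hσa : ∀ j ≤ J, ξ + j < A := fun j hj => by
    have : (j : ℝ) ≤ J := mod_cast hj
    linarith
  constructor
  · intro u hu
    simpa [Φ, MellinConvergent] using mellinConvergent_of_isBigO_rpow (hloc 0 J.zero_le)
      (htop 0 J.zero_le) (by simpa [hu] using hσa 0 J.zero_le) (hbot 0 J.zero_le)
      (by simp only [Nat.cast_zero, zero_sub, hu]; linarith)
  · simpa [Φ, mellin] using exists_norm_mellin_le_mul_one_add_abs_rpow_neg hderiv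
      (hloc J le_rfl) htop hσa hbot (fun j _ => by linarith)

/-- Mellin transform bound: if `φ` is `C^J` on `[0,∞)` with `φ^{(j)}(0) = 0` and
`|φ^{(j)}(x)| ≤ C(1+x)^{−A}` for `0 ≤ j ≤ J`, then for `−J < ξ < A − J` the Mellin
transform `φ̃(u) = ∫₀^∞ t^{u−1} φ(t) dt` converges absolutely on `Re u = ξ` and
`|φ̃(ξ+it)| ≤ C′(1+|t|)^{−J}`. -/
theorem stmt_12 (J : ℕ) (hJ : 1 ≤ J) (A C : ℝ) (hA : 0 < A) (hC : 0 < C)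
    (φ : ℝ → ℂ) (hφ : ContDiffOn ℝ J φ (Set.Ici 0))
    (hφ0 : ∀ j : ℕ, j ≤ J → iteratedDerivWithin j φ (Set.Ici 0) 0 = 0)
    (hφb : ∀ j : ℕ, j ≤ J → ∀ x : ℝ, 0 ≤ x →
      ‖iteratedDerivWithin j φ (Set.Ici 0) x‖ ≤ C * (1 + x) ^ (-A))
    (ξ : ℝ) (hξ1 : -(J : ℝ) < ξ) (hξ2 : ξ < A - J) :
    (∀ u : ℂ, u.re = ξ →
      MeasureTheory.IntegrableOn (fun t : ℝ => ((t : ℂ)) ^ (u - 1) * φ t) (Set.Ioi 0)) ∧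
    ∃ C' : ℝ, ∀ t : ℝ,
      ‖∫ x in Set.Ioi (0 : ℝ), ((x : ℂ)) ^ (((ξ : ℂ) + (t : ℂ) * Complex.I) - 1) * φ x‖
        ≤ C' * (1 + |t|) ^ (-(J : ℝ)) :=
  stmt_12_general J A C hA hC φ hφ hφ0 hφb ξ hξ1 hξ2
end
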